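/- Let ι be a type, E : ι → ℝ, and λ ∈ ℝ. Let B ≥ 2 and suppose a family G assigns a real number G(τ₁|…|τ_B) to every B-tuple of nonempty finite tuples τ_β = (a^β₁,…,a^β_{N_β}) of indices whose values E² are pairwise distinct (across all entries), such that: (i) G is invariant under permutations of the B tuples; (ii) whenever N₁ ≥ 2, G((a¹₁,a¹₂,…,a¹_{N₁})|τ₂|…|τ_B) = λ·(G((a¹₁,a¹₃,…,a¹_{N₁})|τ₂|…|τ_B) − G((a¹₂,a¹₃,…,a¹_{N₁})|τ₂|…|τ_B))/(E_{a¹₁}² − E_{a¹₂}²). Then G(τ₁|…|τ_B) = λ^{N₁+⋯+N_B−B}·Σ_{k₁=1}^{N₁}⋯Σ_{k_B=1}^{N_B} G((a¹_{k₁})|(a²_{k₂})|…|(a^B_{k_B}))·∏_{β=1}^B ∏_{l=1, l≠k_β}^{N_β} 1/(E_{a^β_{k_β}}² − E_{a^β_l}²). -/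

import Mathlib

/-!
Read boundary by boundary, the right-hand side is a divided difference of the `(1+⋯+1)`-point
function in the nodes `E²`. Divided differences obey the recursion
`f[x,y,r] = (f[x,r] − f[y,r]) / (E_x² − E_y²)` (this is the identity
`P_{xy}(P_{zx} − P_{zy}) = P_{zx} P_{zy}`), which is the Schwinger–Dyson recursion without the
factor `λ`. Both sides are symmetric under permuting boundaries, so a boundary of length `≥ 2` can
be moved to the front, and induction on `N₁ + ⋯ + N_B` reduces everything to the case where all
boundaries are singletons, in which the two sides coincide.
-/

open Finset

theorem Fin.prod_univ_erase_zero {M : Type*} [CommMonoid M] {n : ℕ} (g : Fin (n + 1) → M) :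
    ∏ u ∈ univ.erase 0, g u = ∏ u : Fin n, g u.succ := by
  simp [← filter_ne', prod_filter, Fin.prod_univ_succ, Fin.succ_ne_zero]

theorem Fin.prod_univ_erase_succ {M : Type*} [CommMonoid M] {n : ℕ} (g : Fin (n + 1) → M)
    (j : Fin n) : ∏ u ∈ univ.erase j.succ, g u = g 0 * ∏ u ∈ univ.erase j, g u.succ := by
  simp [← filter_ne', prod_filter, Fin.prod_univ_succ, (Fin.succ_ne_zero _).symm]

theorem List.flatten_ofFn_cons {α : Type*} {b : ℕ} (L : List α) (T : Fin b → List α) :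
    (List.ofFn (Fin.cons L T : Fin (b + 1) → List α)).flatten = L ++ (List.ofFn T).flatten := by
  simp [List.ofFn_succ]

theorem List.flatten_ofFn_singleton_get_sublist {α : Type*} :
    ∀ {B : ℕ} (τ : Fin B → List α) (k : (β : Fin B) → Fin (τ β).length),
      (List.ofFn fun β => [(τ β).get (k β)]).flatten.Sublist (List.ofFn τ).flatten
  | 0, _, _ => by simp
  | _ + 1, τ, k => by
    simp only [List.ofFn_succ, List.flatten_cons]
    exact (List.singleton_sublist.mpr (List.get_mem _ _)).append
      (flatten_ofFn_singleton_get_sublist (fun i => τ i.succ) fun i => k i.succ)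

section DividedDifference

variable {ι : Type*} (e : ι → ℝ)

noncomputable def divDiffWeight (l : List ι) (j : Fin l.length) : ℝ :=
  ∏ u ∈ univ.erase j, (e (l.get j) - e (l.get u))⁻¹

/-- Lagrange form of the divided difference of `f` at the nodes `e (l.get j)`; the weights are
the paper's products of `P_{ab}`. -/
noncomputable def divDiff (f : ι → ℝ) (l : List ι) : ℝ :=
  ∑ j, f (l.get j) * divDiffWeight e l j

theorem divDiffWeight_cons_zero (x : ι) (l : List ι) :
    divDiffWeight e (x :: l) 0 = ∏ u : Fin l.length, (e x - e (l.get u))⁻¹ :=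
  Fin.prod_univ_erase_zero _

theorem divDiffWeight_cons_succ (x : ι) (l : List ι) (j : Fin l.length) :
    divDiffWeight e (x :: l) j.succ = (e (l.get j) - e x)⁻¹ * divDiffWeight e l j :=
  Fin.prod_univ_erase_succ _ j

theorem divDiff_cons (f : ι → ℝ) (x : ι) (l : List ι) :
    divDiff e f (x :: l) = f x * ∏ u : Fin l.length, (e x - e (l.get u))⁻¹ +
      ∑ j, f (l.get j) * ((e (l.get j) - e x)⁻¹ * divDiffWeight e l j) := by
  refine (Fin.sum_univ_succ (n := l.length) _).trans ?_
  simp only [divDiffWeight_cons_zero, divDiffWeight_cons_succ, List.get_cons_zero,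
    List.get_cons_succ']

theorem divDiff_cons_cons (f : ι → ℝ) {x y : ι} {r : List ι} (hxy : e x ≠ e y)
    (hx : ∀ z ∈ r, e x ≠ e z) (hy : ∀ z ∈ r, e y ≠ e z) :
    divDiff e f (x :: y :: r) = (divDiff e f (x :: r) - divDiff e f (y :: r)) / (e x - e y) := by
  have hd : e x - e y ≠ 0 := sub_ne_zero.mpr hxy
  have hsum : ∑ j, f (r.get j) * ((e (r.get j) - e x)⁻¹ *
        ((e (r.get j) - e y)⁻¹ * divDiffWeight e r j)) =
      (∑ j, f (r.get j) * ((e (r.get j) - e x)⁻¹ * divDiffWeight e r j) -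
        ∑ j, f (r.get j) * ((e (r.get j) - e y)⁻¹ * divDiffWeight e r j)) / (e x - e y) := by
    rw [← sum_sub_distrib, sum_div]
    refine sum_congr rfl fun j _ => ?_
    have hjx : e (r.get j) - e x ≠ 0 := sub_ne_zero.mpr (hx _ (List.get_mem _ _)).symm
    have hjy : e (r.get j) - e y ≠ 0 := sub_ne_zero.mpr (hy _ (List.get_mem _ _)).symm
    field_simp
    ring
  rw [divDiff_cons, divDiff_cons, divDiff_cons]
  erw [Fin.prod_univ_succ (n := r.length), Fin.sum_univ_succ (n := r.length)]
  simp only [divDiffWeight_cons_zero, divDiffWeight_cons_succ, List.get_cons_zero,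
    List.get_cons_succ']
  rw [hsum]
  field_simp
  ring

end DividedDifference

def EntriesDistinct {ι : Type*} (e : ι → ℝ) {B : ℕ} (τ : Fin B → List ι) : Prop :=
  ((List.ofFn τ).flatten.map e).Pairwise (· ≠ ·)

namespace EntriesDistinct

variable {ι : Type*} {e : ι → ℝ}

theorem comp_perm {B : ℕ} {τ : Fin B → List ι} (h : EntriesDistinct e τ)
    (σ : Equiv.Perm (Fin B)) : EntriesDistinct e (τ ∘ σ) :=
  (List.Perm.pairwise_iff Ne.symm ((σ.ofFn_comp_perm τ).flatten.map e)).mpr h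

theorem select {B : ℕ} {τ : Fin B → List ι} (h : EntriesDistinct e τ)
    (k : (β : Fin B) → Fin (τ β).length) : EntriesDistinct e fun β => [(τ β).get (k β)] :=
  h.sublist ((List.flatten_ofFn_singleton_get_sublist τ k).map e)

theorem cons_of_sublist {b : ℕ} {L L' : List ι} {T : Fin b → List ι}
    (h : EntriesDistinct e (Fin.cons L T : Fin (b + 1) → List ι)) (hL : L'.Sublist L) :
    EntriesDistinct e (Fin.cons L' T : Fin (b + 1) → List ι) := by
  unfold EntriesDistinct at h ⊢
  rw [List.flatten_ofFn_cons] at h ⊢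
  exact h.sublist ((hL.append_right _).map e)

theorem head_cons_cons {b : ℕ} {x y : ι} {r : List ι} {T : Fin b → List ι}
    (h : EntriesDistinct e (Fin.cons (x :: y :: r) T : Fin (b + 1) → List ι)) :
    e x ≠ e y ∧ (∀ z ∈ r, e x ≠ e z) ∧ ∀ z ∈ r, e y ≠ e z := by
  unfold EntriesDistinct at h
  simp only [List.flatten_ofFn_cons, List.cons_append, List.map_cons, List.pairwise_cons,
    List.mem_cons, List.mem_map, List.mem_append] at h
  refine ⟨h.1 _ (Or.inl rfl), fun z hz => h.1 _ (Or.inr ⟨z, Or.inl hz, rfl⟩),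
    fun z hz => h.2.1 _ ⟨z, Or.inl hz, rfl⟩⟩

end EntriesDistinct

section SingletonExpansion

variable {ι : Type*} (e : ι → ℝ)

noncomputable def singletonExpansion {B : ℕ} (G : (Fin B → List ι) → ℝ) (τ : Fin B → List ι) :
    ℝ :=
  ∑ k : (β : Fin B) → Fin (τ β).length,
    G (fun β => [(τ β).get (k β)]) * ∏ β, divDiffWeight e (τ β) (k β)

theorem singletonExpansion_cons {b : ℕ} (G : (Fin (b + 1) → List ι) → ℝ) (L : List ι)
    (T : Fin b → List ι) :
    singletonExpansion e G (Fin.cons L T) =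
      ∑ m : (i : Fin b) → Fin (T i).length, (∏ i, divDiffWeight e (T i) (m i)) *
        divDiff e (fun a => G (Fin.cons [a] fun i => [(T i).get (m i)])) L := by
  rw [singletonExpansion, ← (Fin.consEquiv _).sum_comp, Fintype.sum_prod_type, sum_comm]
  refine sum_congr rfl fun m _ => ?_
  rw [divDiff, mul_sum]
  refine sum_congr rfl fun j _ => ?_
  rw [Fin.prod_univ_succ, mul_comm (divDiffWeight _ _ _), mul_left_comm]
  congr 3
  funext β
  cases β using Fin.cases <;> rfl

theorem singletonExpansion_cons_cons {b : ℕ} (G : (Fin (b + 1) → List ι) → ℝ) {x y : ι}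
    {r : List ι} (T : Fin b → List ι) (hxy : e x ≠ e y)
    (hx : ∀ z ∈ r, e x ≠ e z) (hy : ∀ z ∈ r, e y ≠ e z) :
    singletonExpansion e G (Fin.cons (x :: y :: r) T) =
      (singletonExpansion e G (Fin.cons (x :: r) T) -
        singletonExpansion e G (Fin.cons (y :: r) T)) / (e x - e y) := by
  simp only [singletonExpansion_cons, divDiff_cons_cons e _ hxy hx hy, mul_div_assoc', mul_sub]
  rw [← sum_sub_distrib, sum_div]

theorem singletonExpansion_comp_perm {B : ℕ} (G : (Fin B → List ι) → ℝ) (τ : Fin B → List ι)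
    (σ : Equiv.Perm (Fin B))
    (hG : ∀ k : (β : Fin B) → Fin (τ β).length,
      G ((fun β => [(τ β).get (k β)]) ∘ σ) = G fun β => [(τ β).get (k β)]) :
    singletonExpansion e G (τ ∘ σ) = singletonExpansion e G τ := by
  refine (Fintype.sum_equiv (Equiv.piCongrLeft' (fun β => Fin (τ β).length) σ.symm) _ _
    fun k => ?_).symm
  rw [← hG k]
  exact congrArg _ (Equiv.prod_comp σ _).symm

theorem singletonExpansion_of_length_eq_one {B : ℕ} (G : (Fin B → List ι) → ℝ)
    {τ : Fin B → List ι} (hτ : ∀ β, (τ β).length = 1) : singletonExpansion e G τ = G τ := by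
  have (β : Fin B) : Subsingleton (Fin (τ β).length) := by rw [hτ β]; infer_instance
  rw [singletonExpansion, Fintype.sum_subsingleton _ fun β => ⟨0, by rw [hτ β]; exact one_pos⟩]
  have hsel : (fun β => [(τ β).get ⟨0, by rw [hτ β]; exact one_pos⟩]) = τ := by
    funext β
    refine List.ext_get (by simp [hτ β]) fun n hn _ => ?_
    obtain rfl : n = 0 := by simpa using hn
    rfl
  rw [hsel, prod_eq_one fun β _ => show divDiffWeight e (τ β) _ = 1 from prod_eq_one fun u hu =>
    absurd (Subsingleton.elim _ _) (ne_of_mem_erase hu), mul_one]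

end SingletonExpansion

section Reduction

variable {ι : Type*} (e : ι → ℝ) (lam : ℝ)

def HasSingletonExpansion {B : ℕ} (G : (Fin B → List ι) → ℝ) (τ : Fin B → List ι) : Prop :=
  G τ = lam ^ (∑ β, (τ β).length - B) * singletonExpansion e G τ

variable {e lam}

theorem hasSingletonExpansion_of_length_eq_one {B : ℕ} {G : (Fin B → List ι) → ℝ}
    {τ : Fin B → List ι} (hτ : ∀ β, (τ β).length = 1) : HasSingletonExpansion e lam G τ := by
  rw [HasSingletonExpansion, singletonExpansion_of_length_eq_one e G hτ,
    sum_congr rfl fun β _ => hτ β]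
  simp

theorem HasSingletonExpansion.of_comp_perm {B : ℕ} {G : (Fin B → List ι) → ℝ}
    {τ : Fin B → List ι} (σ : Equiv.Perm (Fin B)) (hG : G (τ ∘ σ) = G τ)
    (hGsel : ∀ k : (β : Fin B) → Fin (τ β).length,
      G ((fun β => [(τ β).get (k β)]) ∘ σ) = G fun β => [(τ β).get (k β)])
    (h : HasSingletonExpansion e lam G (τ ∘ σ)) : HasSingletonExpansion e lam G τ := by
  rwa [HasSingletonExpansion, hG, singletonExpansion_comp_perm e G τ σ hGsel,
    Function.comp_def, Equiv.sum_comp σ fun β => (τ β).length] at h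

theorem HasSingletonExpansion.cons_cons {b : ℕ} {G : (Fin (b + 1) → List ι) → ℝ} {x y : ι}
    {r : List ι} {T : Fin b → List ι} (hT : ∀ i, T i ≠ [])
    (hxy : e x ≠ e y) (hx : ∀ z ∈ r, e x ≠ e z) (hy : ∀ z ∈ r, e y ≠ e z)
    (hrec : G (Fin.cons (x :: y :: r) T) =
      lam * (G (Fin.cons (x :: r) T) - G (Fin.cons (y :: r) T)) / (e x - e y))
    (hxr : HasSingletonExpansion e lam G (Fin.cons (x :: r) T))
    (hyr : HasSingletonExpansion e lam G (Fin.cons (y :: r) T)) :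
    HasSingletonExpansion e lam G (Fin.cons (x :: y :: r) T) := by
  have hb : b ≤ ∑ i, (T i).length := by
    simpa using card_nsmul_le_sum univ (fun i => (T i).length) 1
      fun i _ => List.length_pos_iff.mpr (hT i)
  unfold HasSingletonExpansion at hxr hyr ⊢
  simp only [Fin.sum_univ_succ, Fin.cons_zero, Fin.cons_succ, List.length_cons] at hxr hyr ⊢
  rw [hrec, hxr, hyr, singletonExpansion_cons_cons e G T hxy hx hy,
    show r.length + 1 + 1 + ∑ i, (T i).length - (b + 1) =
      r.length + 1 + ∑ i, (T i).length - (b + 1) + 1 by omega, pow_succ]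
  ring

theorem hasSingletonExpansion {b : ℕ} {G : (Fin (b + 1) → List ι) → ℝ}
    (hsym : ∀ τ : Fin (b + 1) → List ι, (∀ β, τ β ≠ []) → EntriesDistinct e τ →
      ∀ σ : Equiv.Perm (Fin (b + 1)), G (τ ∘ σ) = G τ)
    (hrec : ∀ (x y : ι) (r : List ι) (T : Fin b → List ι), (∀ i, T i ≠ []) →
      EntriesDistinct e (Fin.cons (x :: y :: r) T : Fin (b + 1) → List ι) →
      G (Fin.cons (x :: y :: r) T) =
        lam * (G (Fin.cons (x :: r) T) - G (Fin.cons (y :: r) T)) / (e x - e y))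
    (τ : Fin (b + 1) → List ι) (hne : ∀ β, τ β ≠ []) (hd : EntriesDistinct e τ) :
    HasSingletonExpansion e lam G τ := by
  induction hN : ∑ β, (τ β).length using Nat.strong_induction_on generalizing τ with
  | _ N IH =>
  by_cases hall : ∀ β, (τ β).length = 1
  · exact hasSingletonExpansion_of_length_eq_one hall
  obtain ⟨β₀, hβ₀⟩ := not_forall.mp hall
  obtain ⟨x, y, r, hxyr⟩ : ∃ x y r, τ β₀ = x :: y :: r := by
    match h : τ β₀, hne β₀, hβ₀ with
    | x :: y :: r, _, _ => exact ⟨x, y, r, rfl⟩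
    | [_], _, h1 => exact absurd rfl h1
  -- bring the boundary of length ≥ 2 to the front, where the recursion applies
  let σ := Equiv.swap 0 β₀
  let T := Fin.tail (τ ∘ σ)
  have hτσ : τ ∘ σ = Fin.cons (x :: y :: r) T := by
    rw [← hxyr, ← Equiv.swap_apply_left 0 β₀]
    exact (Fin.cons_self_tail _).symm
  refine .of_comp_perm σ (hsym τ hne hd σ) (fun k => hsym _ (by simp) (hd.select k) σ) ?_
  have hT (i : Fin b) : T i ≠ [] := hne _
  have hdσ := hd.comp_perm σ
  rw [hτσ] at hdσ ⊢
  obtain ⟨hxy, hx, hy⟩ := hdσ.head_cons_cons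
  have hlen (z : ι) : ∑ β, ((Fin.cons (z :: r) T : Fin (b + 1) → List ι) β).length < N := by
    rw [← hN, ← Equiv.sum_comp σ fun β => (τ β).length]
    change _ < ∑ β, ((τ ∘ σ) β).length
    rw [hτσ]
    simp [Fin.sum_univ_succ]
  have hne' (z : ι) : ∀ β, (Fin.cons (z :: r) T : Fin (b + 1) → List ι) β ≠ [] :=
    Fin.cases (List.cons_ne_nil _ _) hT
  exact .cons_cons hT hxy hx hy (hrec x y r T hT hdσ)
    (IH _ (hlen x) _ (hne' x) (hdσ.cons_of_sublist ((List.sublist_cons_self y r).cons_cons x)) rfl)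
    (IH _ (hlen y) _ (hne' y) (hdσ.cons_of_sublist (List.sublist_cons_self x _)) rfl)

end Reduction

theorem stmt_6 {ι : Type*} (E : ι → ℝ) (lam : ℝ) (B : ℕ) (hB : 2 ≤ B)
    (G : (Fin B → List ι) → ℝ)
    (hsym : ∀ τ : Fin B → List ι, (∀ β, τ β ≠ []) →
      (((List.ofFn τ).flatten.map fun a => E a ^ 2).Pairwise (· ≠ ·)) →
      ∀ σ : Equiv.Perm (Fin B), G (τ ∘ σ) = G τ)
    (hrec : ∀ (x y : ι) (r : List ι) (τ : Fin B → List ι), (∀ β, τ β ≠ []) →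
      (((List.ofFn τ).flatten.map fun a => E a ^ 2).Pairwise (· ≠ ·)) →
      τ ⟨0, by omega⟩ = x :: y :: r →
      G τ = lam * (G (Function.update τ ⟨0, by omega⟩ (x :: r))
          - G (Function.update τ ⟨0, by omega⟩ (y :: r))) / (E x ^ 2 - E y ^ 2)) :
    ∀ τ : Fin B → List ι, (∀ β, τ β ≠ []) →
      (((List.ofFn τ).flatten.map fun a => E a ^ 2).Pairwise (· ≠ ·)) →
      G τ = lam ^ ((∑ β, (τ β).length) - B) *
        ∑ k : (β : Fin B) → Fin (τ β).length,
          G (fun β => [(τ β).get (k β)]) *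
            ∏ β, ∏ l ∈ Finset.univ.erase (k β),
              (E ((τ β).get (k β)) ^ 2 - E ((τ β).get l) ^ 2)⁻¹ := by
  obtain ⟨b, rfl⟩ : ∃ b, B = b + 1 := ⟨B - 1, by omega⟩
  refine hasSingletonExpansion (e := fun a => E a ^ 2) hsym fun x y r T hT hd => ?_
  have h := hrec x y r (Fin.cons (x :: y :: r) T) (Fin.cases (List.cons_ne_nil _ _) hT) hd rfl
  rwa [show (⟨0, by omega⟩ : Fin (b + 1)) = 0 from rfl, Fin.update_cons_zero,
    Fin.update_cons_zero] at h
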